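/- For any integer d ≥ 2, any real p ≥ 0, and any (x_1,…,x_d) ∈ Δ_d, it holds that Σ_{i=1}^{d−1} Σ_{k ∉ {i, i+1}, 1 ≤ k ≤ d} 1/((x_{i+1} − x_i)^p (x_{i+1} − x_k)(x_i − x_k)) < (2 − 3/d) Σ_{i=1}^{d−1} 1/(x_{i+1} − x_i)^{p+2}. -/

import Mathlib

/-!
Write `g_j = x_{j+1} - x_j`, `u_j = g_j^{-(p+2)}` and `μ = 1/(p+2)`. For `k < i` the factors
`x_i - x_k` and `x_{i+1} - x_k` are sums of `m = i - k` and `m + 1` consecutive gaps, so AM-HM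
bounds their reciprocals by averages of the `g_j⁻¹`; weighted AM-GM with weights `p, 1, 1` then
turns each product `g_i^{-p} g_b⁻¹ g_a⁻¹` into a combination of `u_i, u_b, u_a`. After summing, the
terms with `k < i` put the weight `lowerWeight p n t = 1 - (1 - μ)/(t+1) - μ ∑_{j=n-t}^{n} 1/j²`
on `u_t` (telescoping). The terms with `k > i + 1` are the terms with `k < i` of the mirrored
configuration `j ↦ -x_{n-j}`, whose gaps are those of `x` in reverse order. Hence `u_t` carries at
most `lowerWeight p n t + lowerWeight p n (n-1-t)`, which is `< 2 - 3/(n+1)` because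
`∑_{j=a+1}^{n} 1/j² > 1/(a+1) - 1/(n+1)`, `1/(t+1) + 1/(n-t) ≥ 4/(n+1)` and `μ ≤ 1/2`.
-/

open Finset

namespace SumOffdiag

theorem inv_sum_le_sum_inv_div_card_sq {K ι : Type*} [Field K] [LinearOrder K]
    [IsStrictOrderedRing K] {s : Finset ι} (hs : s.Nonempty) {g : ι → K} (hg : ∀ j ∈ s, 0 < g j) :
    (∑ j ∈ s, g j)⁻¹ ≤ (∑ j ∈ s, (g j)⁻¹) / (#s : K) ^ 2 := by
  have titu := sq_sum_div_le_sum_sq_div s (fun _ => (1 : K)) hg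
  simp only [sum_const, nsmul_eq_mul, mul_one, one_pow, one_div] at titu
  have hA : 0 < ∑ j ∈ s, g j := sum_pos hg hs
  have hm : (0 : K) < #s := by exact_mod_cast hs.card_pos
  rw [le_div_iff₀ (by positivity)]
  calc (∑ j ∈ s, g j)⁻¹ * (#s : K) ^ 2 = (#s : K) ^ 2 / ∑ j ∈ s, g j := by ring
    _ ≤ _ := titu

theorem inv_rpow_mul_inv_mul_inv_le {a b c p : ℝ} (ha : 0 < a) (hb : 0 < b) (hc : 0 < c)
    (hp : 0 ≤ p) :
    (a ^ p)⁻¹ * b⁻¹ * c⁻¹ ≤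
      (p * (a ^ (p + 2))⁻¹ + (b ^ (p + 2))⁻¹ + (c ^ (p + 2))⁻¹) / (p + 2) := by
  have hq : 0 < p + 2 := by linarith
  have root : ∀ {y : ℝ}, 0 < y → ∀ r, ((y ^ (p + 2))⁻¹) ^ (r / (p + 2)) = (y ^ r)⁻¹ := by
    intro y hy r
    rw [Real.inv_rpow (by positivity), ← Real.rpow_mul hy.le, mul_div_cancel₀ _ hq.ne']
  have amgm := Real.geom_mean_le_arith_mean3_weighted (w₁ := p / (p + 2)) (w₂ := 1 / (p + 2))
    (w₃ := 1 / (p + 2)) (p₁ := (a ^ (p + 2))⁻¹) (p₂ := (b ^ (p + 2))⁻¹) (p₃ := (c ^ (p + 2))⁻¹)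
    (by positivity) (by positivity) (by positivity) (by positivity) (by positivity)
    (by positivity) (by field_simp; ring)
  rw [root ha, root hb, root hc, Real.rpow_one, Real.rpow_one] at amgm
  calc (a ^ p)⁻¹ * b⁻¹ * c⁻¹ ≤ _ := amgm
    _ = _ := by ring

theorem inv_rpow_mul_sum_inv_mul_sum_inv_le {ι : Type*} (s t : Finset ι) {g : ι → ℝ}
    (hs : ∀ j ∈ s, 0 < g j) (ht : ∀ j ∈ t, 0 < g j) {c p : ℝ} (hc : 0 < c) (hp : 0 ≤ p) :
    (c ^ p)⁻¹ * (∑ b ∈ t, (g b)⁻¹) * ∑ a ∈ s, (g a)⁻¹ ≤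
      (p * #t * #s * (c ^ (p + 2))⁻¹ + #s * ∑ b ∈ t, (g b ^ (p + 2))⁻¹
        + #t * ∑ a ∈ s, (g a ^ (p + 2))⁻¹) / (p + 2) := by
  calc (c ^ p)⁻¹ * (∑ b ∈ t, (g b)⁻¹) * ∑ a ∈ s, (g a)⁻¹
      = ∑ b ∈ t, ∑ a ∈ s, (c ^ p)⁻¹ * (g b)⁻¹ * (g a)⁻¹ := by
        rw [mul_assoc, sum_mul_sum]
        simp_rw [mul_sum, mul_assoc]
    _ ≤ ∑ b ∈ t, ∑ a ∈ s,
          (p * (c ^ (p + 2))⁻¹ + (g b ^ (p + 2))⁻¹ + (g a ^ (p + 2))⁻¹) / (p + 2) :=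
        sum_le_sum fun b hb => sum_le_sum fun a ha =>
          inv_rpow_mul_inv_mul_inv_le hc (ht b hb) (hs a ha) hp
    _ = _ := by
        simp only [← sum_div, sum_add_distrib, sum_const, nsmul_eq_mul, ← mul_sum]
        ring

-- `(p (m + 1) + 1) / ((p + 2) m (m + 1)²)` and `(2m + 1) / ((p + 2) m² (m + 1)²)`, the coefficients
-- produced by AM-HM and AM-GM for `m` inner gaps, written in telescoping form.
noncomputable def selfWeight (p : ℝ) (m : ℕ) : ℝ :=
  (1 - (p + 2)⁻¹) * ((m : ℝ)⁻¹ - ((m : ℝ) + 1)⁻¹) - (p + 2)⁻¹ * (((m : ℝ) + 1) ^ 2)⁻¹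

noncomputable def innerWeight (p : ℝ) (m : ℕ) : ℝ :=
  (p + 2)⁻¹ * (((m : ℝ) ^ 2)⁻¹ - (((m : ℝ) + 1) ^ 2)⁻¹)

theorem inv_rpow_mul_sum_insert_mul_sum_le {ι : Type*} [DecidableEq ι] {s : Finset ι} {i : ι}
    (hi : i ∉ s) (hs : s.Nonempty) {g : ι → ℝ} (hg : ∀ j ∈ insert i s, 0 < g j) {p : ℝ}
    (hp : 0 ≤ p) :
    (g i ^ p * (∑ j ∈ insert i s, g j) * ∑ j ∈ s, g j)⁻¹ ≤
      selfWeight p #s * (g i ^ (p + 2))⁻¹ + innerWeight p #s * ∑ j ∈ s, (g j ^ (p + 2))⁻¹ := by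
  have hgs : ∀ j ∈ s, 0 < g j := fun j hj => hg j (mem_insert_of_mem hj)
  have hgi : 0 < g i := hg i (mem_insert_self i s)
  have hm : (0 : ℝ) < #s := by exact_mod_cast hs.card_pos
  have hq : 0 < p + 2 := by linarith
  have hcard : (#(insert i s) : ℝ) = #s + 1 := by rw [card_insert_of_notMem hi, Nat.cast_succ]
  calc (g i ^ p * (∑ j ∈ insert i s, g j) * ∑ j ∈ s, g j)⁻¹
      = (g i ^ p)⁻¹ * (∑ j ∈ insert i s, g j)⁻¹ * (∑ j ∈ s, g j)⁻¹ := by rw [mul_inv, mul_inv]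
    _ ≤ (g i ^ p)⁻¹ * ((∑ j ∈ insert i s, (g j)⁻¹) / (#s + 1) ^ 2)
          * ((∑ j ∈ s, (g j)⁻¹) / (#s : ℝ) ^ 2) := by
        have hA : 0 ≤ (∑ j ∈ s, g j)⁻¹ := inv_nonneg.2 (sum_pos hgs hs).le
        have hH : 0 ≤ ∑ j ∈ insert i s, (g j)⁻¹ :=
          (sum_pos (fun j hj => inv_pos.2 (hg j hj)) (insert_nonempty i s)).le
        rw [← hcard]
        gcongr
        · exact inv_sum_le_sum_inv_div_card_sq (insert_nonempty i s) hg
        · exact inv_sum_le_sum_inv_div_card_sq hs hgs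
    _ = (g i ^ p)⁻¹ * (∑ j ∈ insert i s, (g j)⁻¹) * (∑ j ∈ s, (g j)⁻¹)
          / ((#s + 1) ^ 2 * (#s : ℝ) ^ 2) := by field_simp
    _ ≤ (p * #(insert i s) * #s * (g i ^ (p + 2))⁻¹
          + #s * ∑ b ∈ insert i s, (g b ^ (p + 2))⁻¹ + #(insert i s) * ∑ a ∈ s, (g a ^ (p + 2))⁻¹)
          / (p + 2) / ((#s + 1) ^ 2 * (#s : ℝ) ^ 2) := by
        gcongr
        exact inv_rpow_mul_sum_inv_mul_sum_inv_le s _ hgs hg hgi hp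
    _ = _ := by
        rw [hcard, sum_insert hi, selfWeight, innerWeight]
        field_simp
        ring

noncomputable def offdiagTerm (p : ℝ) (x : ℕ → ℝ) (i k : ℕ) : ℝ :=
  1 / ((x (i + 1) - x i) ^ p * (x (i + 1) - x k) * (x i - x k))

theorem offdiagTerm_le {n : ℕ} {p : ℝ} (hp : 0 ≤ p) {x : ℕ → ℝ} (hx : ∀ j < n, x j < x (j + 1))
    {i k : ℕ} (hi : i < n) (hk : k < i) :
    offdiagTerm p x i k ≤ selfWeight p (i - k) * ((x (i + 1) - x i) ^ (p + 2))⁻¹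
      + innerWeight p (i - k) * ∑ a ∈ Ico k i, ((x (a + 1) - x a) ^ (p + 2))⁻¹ := by
  have hins : insert i (Ico k i) = Ico k (i + 1) := (Nat.Ico_succ_right_eq_insert_Ico hk.le).symm
  have hgap : ∀ j ∈ insert i (Ico k i), 0 < x (j + 1) - x j := by
    intro j hj
    rw [hins, mem_Ico] at hj
    exact sub_pos.2 (hx j (by omega))
  have bound := inv_rpow_mul_sum_insert_mul_sum_le (by simp) (nonempty_Ico.2 hk) hgap hp
  rwa [Nat.card_Ico, hins, sum_Ico_sub x (by omega), sum_Ico_sub x hk.le, ← one_div] at bound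

noncomputable def lowerWeight (p : ℝ) (n t : ℕ) : ℝ :=
  ∑ k ∈ range t, selfWeight p (t - k)
    + ∑ i ∈ Ico (t + 1) n, ∑ k ∈ range (t + 1), innerWeight p (i - k)

theorem sum_mul_sum_Ico_comm {R : Type*} [NonUnitalNonAssocSemiring R] (n : ℕ)
    (w : ℕ → ℕ → R) (u : ℕ → R) :
    ∑ i ∈ range n, ∑ k ∈ range i, w i k * ∑ a ∈ Ico k i, u a =
      ∑ a ∈ range n, (∑ i ∈ Ico (a + 1) n, ∑ k ∈ range (a + 1), w i k) * u a := by
  have inner : ∀ i, ∑ k ∈ range i, w i k * ∑ a ∈ Ico k i, u a =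
      ∑ a ∈ range i, (∑ k ∈ range (a + 1), w i k) * u a := by
    intro i
    simp_rw [mul_sum, sum_mul, range_eq_Ico]
    exact sum_Ico_Ico_comm 0 i fun k a => w i k * u a
  simp_rw [inner, sum_mul, range_eq_Ico]
  exact (sum_Ico_Ico_comm' 0 n fun a i => ∑ k ∈ Ico 0 (a + 1), w i k * u a).symm

theorem sum_sum_offdiagTerm_le {n : ℕ} {p : ℝ} (hp : 0 ≤ p) {x : ℕ → ℝ}
    (hx : ∀ j < n, x j < x (j + 1)) :
    ∑ i ∈ range n, ∑ k ∈ range i, offdiagTerm p x i k ≤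
      ∑ t ∈ range n, lowerWeight p n t * ((x (t + 1) - x t) ^ (p + 2))⁻¹ := by
  calc ∑ i ∈ range n, ∑ k ∈ range i, offdiagTerm p x i k
      ≤ ∑ i ∈ range n, ∑ k ∈ range i, (selfWeight p (i - k) * ((x (i + 1) - x i) ^ (p + 2))⁻¹
          + innerWeight p (i - k) * ∑ a ∈ Ico k i, ((x (a + 1) - x a) ^ (p + 2))⁻¹) :=
        sum_le_sum fun i hi => sum_le_sum fun k hk =>
          offdiagTerm_le hp hx (mem_range.1 hi) (mem_range.1 hk)
    _ = _ := by
        simp_rw [sum_add_distrib, sum_mul_sum_Ico_comm, ← sum_mul, ← sum_add_distrib, ← add_mul]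
        rfl

noncomputable def sumInvSq (m : ℕ) : ℝ := ∑ j ∈ range m, (((j : ℝ) + 1) ^ 2)⁻¹

theorem inv_sub_inv_lt_sumInvSq_sub {a b : ℕ} (hab : a < b) :
    ((a : ℝ) + 1)⁻¹ - ((b : ℝ) + 1)⁻¹ < sumInvSq b - sumInvSq a := by
  calc ((a : ℝ) + 1)⁻¹ - ((b : ℝ) + 1)⁻¹
      = ∑ j ∈ Ico a b, (-(((j + 1 : ℕ) : ℝ) + 1)⁻¹ - -((j : ℝ) + 1)⁻¹) := by
        rw [sum_Ico_sub (fun j : ℕ => -((j : ℝ) + 1)⁻¹) hab.le]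
        ring
    _ < ∑ j ∈ Ico a b, (((j : ℝ) + 1) ^ 2)⁻¹ := by
        refine sum_lt_sum_of_nonempty (nonempty_Ico.2 hab) fun j _ => ?_
        have hj : (0 : ℝ) < j + 1 := by positivity
        rw [Nat.cast_succ, neg_sub_neg, inv_sub_inv hj.ne' (by positivity), add_sub_cancel_left,
          ← one_div, sq]
        gcongr
        linarith
    _ = sumInvSq b - sumInvSq a := sum_Ico_eq_sub _ hab.le

theorem sum_range_selfWeight (p : ℝ) (t : ℕ) :
    ∑ k ∈ range t, selfWeight p (t - k) =
      (1 - (p + 2)⁻¹) * (1 - ((t : ℝ) + 1)⁻¹) - (p + 2)⁻¹ * (sumInvSq (t + 1) - 1) := by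
  have reflect : ∑ k ∈ range t, selfWeight p (t - k) = ∑ m ∈ range t, selfWeight p (m + 1) := by
    rw [← sum_range_reflect]
    exact sum_congr rfl fun k hk => by rw [mem_range] at hk; congr 1; omega
  have telescope := sum_range_sub' (fun m : ℕ => ((m : ℝ) + 1)⁻¹) t
  rw [reflect, sumInvSq, sum_range_succ']
  simp only [selfWeight, sum_sub_distrib, ← mul_sum, Nat.cast_succ] at telescope ⊢
  rw [telescope]
  norm_num

theorem sum_range_innerWeight (p : ℝ) {t i : ℕ} (hti : t < i) :
    ∑ k ∈ range (t + 1), innerWeight p (i - k) =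
      (p + 2)⁻¹ * ((((i - t : ℕ) : ℝ) ^ 2)⁻¹ - (((i : ℝ) + 1) ^ 2)⁻¹) := by
  have step : ∀ k ∈ range (t + 1), innerWeight p (i - k) =
      (p + 2)⁻¹ * ((((i + 1 - (k + 1) : ℕ) : ℝ) ^ 2)⁻¹ - (((i + 1 - k : ℕ) : ℝ) ^ 2)⁻¹) := by
    intro k hk
    rw [mem_range] at hk
    rw [innerWeight, show i + 1 - (k + 1) = i - k by omega, show i + 1 - k = i - k + 1 by omega,
      Nat.cast_succ]
  rw [sum_congr rfl step, ← mul_sum,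
    sum_range_sub (fun k => ((((i + 1 - k : ℕ) : ℝ)) ^ 2)⁻¹), Nat.sub_zero,
    show i + 1 - (t + 1) = i - t by omega, Nat.cast_succ]

theorem lowerWeight_eq (p : ℝ) {n t : ℕ} (ht : t < n) :
    lowerWeight p n t = (1 - (p + 2)⁻¹) * (1 - ((t : ℝ) + 1)⁻¹)
      + (p + 2)⁻¹ * (1 - (sumInvSq n - sumInvSq (n - 1 - t))) := by
  have near : ∑ i ∈ Ico (t + 1) n, (((i - t : ℕ) : ℝ) ^ 2)⁻¹ = sumInvSq (n - 1 - t) := by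
    rw [sum_Ico_eq_sum_range, show n - (t + 1) = n - 1 - t by omega, sumInvSq]
    exact sum_congr rfl fun k _ => by rw [show t + 1 + k - t = k + 1 by omega, Nat.cast_succ]
  have far : ∑ i ∈ Ico (t + 1) n, (((i : ℝ) + 1) ^ 2)⁻¹ = sumInvSq n - sumInvSq (t + 1) :=
    sum_Ico_eq_sub _ (by omega)
  rw [lowerWeight, sum_range_selfWeight,
    sum_congr rfl fun i hi => sum_range_innerWeight p (mem_Ico.1 hi).1, ← mul_sum,
    sum_sub_distrib, near, far]
  ring

theorem lowerWeight_add_lowerWeight_lt {p : ℝ} (hp : 0 ≤ p) {n t : ℕ} (ht : t < n) :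
    lowerWeight p n t + lowerWeight p n (n - 1 - t) < 2 - 3 / ((n : ℝ) + 1) := by
  have hs : ((n - 1 - t : ℕ) : ℝ) + 1 = n - t := by
    rw [Nat.cast_sub (by omega), Nat.cast_sub (by omega)]; ring
  have tail_t := inv_sub_inv_lt_sumInvSq_sub ht
  have tail_s := inv_sub_inv_lt_sumInvSq_sub (by omega : n - 1 - t < n)
  rw [hs] at tail_s
  rw [lowerWeight_eq p ht, lowerWeight_eq p (by omega : n - 1 - t < n),
    show n - 1 - (n - 1 - t) = t by omega, hs, div_eq_mul_inv]
  have hnt : (0 : ℝ) < n - t := by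
    have : (t : ℝ) < n := by exact_mod_cast ht
    linarith
  have harm : 4 * ((n : ℝ) + 1)⁻¹ ≤ ((t : ℝ) + 1)⁻¹ + ((n : ℝ) - t)⁻¹ := by
    rw [← div_eq_mul_inv, div_le_iff₀ (by positivity), inv_add_inv (by positivity) hnt.ne',
      div_mul_eq_mul_div, le_div_iff₀ (by positivity)]
    nlinarith [sq_nonneg ((t : ℝ) + 1 - (n - t))]
  have hμ : 0 < (p + 2)⁻¹ := by positivity
  have hμ' : (p + 2)⁻¹ * ((n : ℝ) + 1)⁻¹ ≤ 2⁻¹ * ((n : ℝ) + 1)⁻¹ :=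
    mul_le_mul_of_nonneg_right (inv_anti₀ (by norm_num) (by linarith)) (by positivity)
  linarith [mul_lt_mul_of_pos_left (add_lt_add tail_t tail_s) hμ]

def mirror (n : ℕ) (x : ℕ → ℝ) (j : ℕ) : ℝ := -x (n - j)

theorem mirror_lt_mirror_succ {n : ℕ} {x : ℕ → ℝ} (hx : ∀ j < n, x j < x (j + 1)) :
    ∀ j < n, mirror n x j < mirror n x (j + 1) := by
  intro j hj
  have h := hx (n - 1 - j) (by omega)
  rw [show n - 1 - j + 1 = n - j by omega, show n - 1 - j = n - (j + 1) by omega] at h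
  exact neg_lt_neg h

theorem mirror_succ_sub_mirror {n t : ℕ} (x : ℕ → ℝ) (ht : t < n) :
    mirror n x (t + 1) - mirror n x t = x (n - 1 - t + 1) - x (n - 1 - t) := by
  rw [mirror, mirror, show n - 1 - t + 1 = n - t by omega, show n - 1 - t = n - (t + 1) by omega]
  ring

theorem offdiagTerm_mirror (p : ℝ) {n i : ℕ} (x : ℕ → ℝ) (hi : i < n) (k : ℕ) :
    offdiagTerm p (mirror n x) i k = offdiagTerm p x (n - 1 - i) (n - k) := by
  simp only [offdiagTerm, mirror, show n - (i + 1) = n - 1 - i by omega,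
    show n - 1 - i + 1 = n - i by omega, neg_sub_neg]
  ring

theorem sum_Ico_add_two_eq_sum_range_reflect {M : Type*} [AddCommMonoid M] (n : ℕ)
    (f : ℕ → ℕ → M) :
    ∑ i ∈ range n, ∑ k ∈ Ico (i + 2) (n + 1), f i k =
      ∑ i ∈ range n, ∑ k ∈ range i, f (n - 1 - i) (n - k) := by
  rw [← sum_range_reflect (fun i => ∑ k ∈ Ico (i + 2) (n + 1), f i k)]
  refine sum_congr rfl fun i hi => ?_
  rw [mem_range] at hi
  rw [sum_Ico_eq_sum_range, show n + 1 - (n - 1 - i + 2) = i by omega,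
    ← sum_range_reflect (fun k => f (n - 1 - i) (n - k)) i]
  refine sum_congr rfl fun k hk => ?_
  rw [mem_range] at hk
  congr 1
  omega

theorem sum_filter_offdiagTerm_eq (n : ℕ) (p : ℝ) (x : ℕ → ℝ) :
    ∑ i ∈ range n, ∑ k ∈ (range (n + 1)).filter (fun k => k ≠ i ∧ k ≠ i + 1),
        offdiagTerm p x i k =
      ∑ i ∈ range n, ∑ k ∈ range i, offdiagTerm p x i k
        + ∑ i ∈ range n, ∑ k ∈ range i, offdiagTerm p (mirror n x) i k := by
  have split : ∀ i ∈ range n, (range (n + 1)).filter (fun k => k ≠ i ∧ k ≠ i + 1) =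
      range i ∪ Ico (i + 2) (n + 1) := by
    intro i hi
    ext k
    simp only [mem_range] at hi
    simp only [mem_filter, mem_range, mem_union, mem_Ico]
    omega
  have disj : ∀ i, Disjoint (range i) (Ico (i + 2) (n + 1)) := fun i =>
    disjoint_left.2 fun k hk hk' => by rw [mem_range] at hk; rw [mem_Ico] at hk'; omega
  rw [sum_congr rfl fun i hi => by rw [split i hi, sum_union (disj i)], sum_add_distrib,
    sum_Ico_add_two_eq_sum_range_reflect]
  congr 1
  refine sum_congr rfl fun i hi => sum_congr rfl fun k _ => ?_
  rw [offdiagTerm_mirror p x (mem_range.1 hi)]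

theorem sum_lowerWeight_mul_mirror (p : ℝ) (n : ℕ) (x : ℕ → ℝ) :
    ∑ t ∈ range n, lowerWeight p n t * ((mirror n x (t + 1) - mirror n x t) ^ (p + 2))⁻¹ =
      ∑ t ∈ range n, lowerWeight p n (n - 1 - t) * ((x (t + 1) - x t) ^ (p + 2))⁻¹ := by
  rw [← sum_range_reflect]
  refine sum_congr rfl fun t ht => ?_
  rw [mem_range] at ht
  rw [mirror_succ_sub_mirror x (by omega : n - 1 - t < n), show n - 1 - (n - 1 - t) = t by omega]

end SumOffdiag

open SumOffdiag in
theorem sum_offdiag_lt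
    (d : ℕ) (hd : 2 ≤ d) (p : ℝ) (hp : 0 ≤ p) (x : ℕ → ℝ)
    (hx : ∀ i, i + 1 < d → x i < x (i + 1)) :
    ∑ i ∈ Finset.range (d - 1),
        ∑ k ∈ (Finset.range d).filter (fun k => k ≠ i ∧ k ≠ i + 1),
          1 / ((x (i + 1) - x i) ^ p * (x (i + 1) - x k) * (x i - x k))
      < (2 - 3 / (d : ℝ)) *
          ∑ i ∈ Finset.range (d - 1), 1 / (x (i + 1) - x i) ^ (p + 2) := by
  obtain ⟨n, rfl⟩ : ∃ n, d = n + 1 := ⟨d - 1, by omega⟩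
  have hx' : ∀ j < n, x j < x (j + 1) := fun j hj => hx j (by omega)
  rw [Nat.add_sub_cancel, Nat.cast_succ, mul_sum]
  calc _ = ∑ i ∈ range n, ∑ k ∈ range i, offdiagTerm p x i k
        + ∑ i ∈ range n, ∑ k ∈ range i, offdiagTerm p (mirror n x) i k :=
        sum_filter_offdiagTerm_eq n p x
    _ ≤ ∑ t ∈ range n, lowerWeight p n t * ((x (t + 1) - x t) ^ (p + 2))⁻¹
        + ∑ t ∈ range n, lowerWeight p n (n - 1 - t) * ((x (t + 1) - x t) ^ (p + 2))⁻¹ := by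
        rw [← sum_lowerWeight_mul_mirror]
        exact add_le_add (sum_sum_offdiagTerm_le hp hx')
          (sum_sum_offdiagTerm_le hp (mirror_lt_mirror_succ hx'))
    _ < ∑ t ∈ range n, (2 - 3 / ((n : ℝ) + 1)) * (1 / (x (t + 1) - x t) ^ (p + 2)) := by
        rw [← sum_add_distrib]
        refine sum_lt_sum_of_nonempty (nonempty_range_iff.2 (by omega)) fun t ht => ?_
        rw [mem_range] at ht
        rw [← add_mul, one_div]
        exact mul_lt_mul_of_pos_right (lowerWeight_add_lowerWeight_lt hp ht)
          (inv_pos.2 (Real.rpow_pos_of_pos (sub_pos.2 (hx' t ht)) _))
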